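/- If a linearly ordered field F does not satisfy the Cut Axiom (that is, F has a gap), then Littlewood's First Principle fails in F: there exist a ≤ b in F, a measurable set E ⊆ [a,b], and ε ∈ P such that for every finite collection of intervals I_1, …, I_m ⊆ [a,b], with U = I_1 ∪ ⋯ ∪ I_m, it is not the case that χ_{E△U} has a Lebesgue integral with ∫_a^b χ_{E△U} < ε. -/

import Mathlib

/-
If some interval `(u, v)` strictly inside `[a, b]` is null, take `E = (u, v)`. For a finite union
`U` of intervals, the function equal to `χ_{E △ U}` off `(u, v)` and to a constant `c` on `(u, v)`
is a step function, and as a constant sequence it converges to `χ_{E △ U}` almost everywhere;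
its integral depends on `c`, so `χ_{E △ U}` has no integral.

Otherwise take a gap `A` with an increasing cofinal sequence `w` (the rationals in `A` if `F` is
Archimedean, the gap above `ℕ` if not), `a ∈ A`, `b ∉ A` and `E = [a, b] \ A`, which is measurable
via the steps `χ_{(w n, b]}`. Given `U`, pick a window `(p, q)` around the gap that contains no
endpoint of `U`; there `E △ U` is `Aᶜ` or `A`. Putting the steps `χ_{(w n, q)}`, resp.
`χ_{(p, r n)}` for a decreasing coinitial sequence `r` in `Aᶜ`, into the window, an integral of
`χ_{E △ U}` would make `w n`, resp. `r n`, converge, and the limit would be a cut point. If `Aᶜ`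
has no such sequence, a decreasing step approximation `ψ n` of `χ_{E △ U}` is constant `≥ 1` on
an interval straddling the gap, and these intervals share a non-null interval of `Aᶜ`, on which
`ψ n` should tend to `0` almost everywhere.
-/

namespace Littlewood

variable {F : Type*} [Field F] [LinearOrder F] [IsStrictOrderedRing F]

/-- A sequence `s` in `F` converges to `L`. -/
def SeqConv (s : ℕ → F) (L : F) : Prop :=
  ∀ ε : F, 0 < ε → ∃ N : ℕ, ∀ n, N ≤ n → s n - L ∈ Set.Ioo (-ε) ε

/-- `φ` is a step function on `[a,b]`: there is a partition
`a = x 0 < x 1 < ⋯ < x n = b` such that `φ` is constant on each open subinterval. -/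
def IsStepOn (a b : F) (φ : F → F) : Prop :=
  ∃ (n : ℕ) (x : ℕ → F), x 0 = a ∧ x n = b ∧ (∀ i < n, x i < x (i + 1)) ∧
    ∀ i < n, ∃ M : F, ∀ t ∈ Set.Ioo (x i) (x (i + 1)), φ t = M

/-- `I` is the integral of the step function `φ` over `[a,b]`, computed from
an admissible partition `a = x 0 < ⋯ < x n = b` with constant values `M i`. -/
def HasStepIntegral (a b : F) (φ : F → F) (I : F) : Prop :=
  ∃ (n : ℕ) (x : ℕ → F) (M : ℕ → F), x 0 = a ∧ x n = b ∧ (∀ i < n, x i < x (i + 1)) ∧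
    (∀ i < n, ∀ t ∈ Set.Ioo (x i) (x (i + 1)), φ t = M i) ∧
    I = ∑ i ∈ Finset.range n, M i * (x (i + 1) - x i)

/-- `S ⊆ [a,b]` has measure zero: for every `ε > 0` there is a countable family of
open intervals `(c n, d n) ⊆ [a,b]` covering `S` whose partial sums of lengths
converge to a sum less than `ε`. -/
def NullSet (a b : F) (S : Set F) : Prop :=
  ∀ ε : F, 0 < ε → ∃ c d : ℕ → F,
    (∀ n, c n ≤ d n ∧ Set.Ioo (c n) (d n) ⊆ Set.Icc a b) ∧
    S ⊆ (⋃ n, Set.Ioo (c n) (d n)) ∧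
    ∃ s : F, s < ε ∧ SeqConv (fun N => ∑ k ∈ Finset.range N, (d k - c k)) s

/-- `Q` holds almost everywhere in `[a,b]`. -/
def AEOn (a b : F) (Q : F → Prop) : Prop :=
  NullSet a b {x ∈ Set.Icc a b | ¬ Q x}

/-- `φ` is a monotonically decreasing sequence of step functions `[a,b] → P ∪ {0}`
converging to `f` almost everywhere in `[a,b]`. -/
def ApproxSeq (a b : F) (φ : ℕ → F → F) (f : F → F) : Prop :=
  (∀ n, IsStepOn a b (φ n)) ∧
  (∀ n, ∀ x ∈ Set.Icc a b, 0 ≤ φ n x) ∧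
  (∀ n, ∀ x ∈ Set.Icc a b, φ (n + 1) x ≤ φ n x) ∧
  AEOn a b fun x => SeqConv (fun n => φ n x) (f x)

/-- A nonnegative-valued function on `[a,b]` is Lebesgue measurable. -/
def LebMeasurableNN (a b : F) (f : F → F) : Prop :=
  ∃ φ : ℕ → F → F, ApproxSeq a b φ f

/-- A nonnegative-valued function on `[a,b]` has Lebesgue integral `I`:
it is Lebesgue measurable and for every monotonically decreasing sequence of
nonnegative step functions converging to `f` a.e., the sequence of their
(step) integrals converges to `I`. -/
def HasLebIntegralNN (a b : F) (f : F → F) (I : F) : Prop :=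
  LebMeasurableNN a b f ∧
    ∀ φ : ℕ → F → F, ApproxSeq a b φ f →
      ∀ J : ℕ → F, (∀ n, HasStepIntegral a b (φ n) (J n)) → SeqConv J I

/-- A function `[a,b] → F` is Lebesgue measurable (via its nonnegative parts). -/
def LebMeasurable (a b : F) (f : F → F) : Prop :=
  LebMeasurableNN a b (fun x => max (f x) 0) ∧ LebMeasurableNN a b fun x => max (-f x) 0

/-- A function `[a,b] → F` has a Lebesgue integral (via its nonnegative parts). -/
def HasLebIntegral (a b : F) (f : F → F) : Prop :=
  (∃ I : F, HasLebIntegralNN a b (fun x => max (f x) 0) I) ∧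
  ∃ I : F, HasLebIntegralNN a b (fun x => max (-f x) 0) I

/-- The characteristic function of `E`. -/
noncomputable def chi (E : Set F) : F → F := E.indicator fun _ => 1

/-- `E ⊆ [a,b]` is a measurable set: its characteristic function is Lebesgue measurable. -/
def MeasSet (a b : F) (E : Set F) : Prop := LebMeasurableNN a b (chi E)

/-- `E` has Lebesgue measure: `E` has measure zero or `χ_E` has a Lebesgue integral. -/
def HasLebMeasure (a b : F) (E : Set F) : Prop :=
  NullSet a b E ∨ ∃ I : F, HasLebIntegralNN a b (chi E) I

/-- `S` is an interval with endpoints `c ≤ d` (any of the four kinds). -/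
def IsIntervalWith (S : Set F) (c d : F) : Prop :=
  S = Set.Icc c d ∨ S = Set.Ico c d ∨ S = Set.Ioc c d ∨ S = Set.Ioo c d

/-- `S` is an interval. -/
def IsInterval (S : Set F) : Prop := ∃ c d : F, IsIntervalWith S c d

/-- `f` is continuous on `D`. -/
def ContOn (D : Set F) (f : F → F) : Prop :=
  ∀ c ∈ D, ∀ ε : F, 0 < ε → ∃ δ : F, 0 < δ ∧
    ∀ x ∈ D ∩ Set.Ioo (c - δ) (c + δ), f x - f c ∈ Set.Ioo (-ε) ε

/-- The functions `g n` converge uniformly to `f` on `D`. -/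
def UnifConvOn (D : Set F) (g : ℕ → F → F) (f : F → F) : Prop :=
  ∀ ε : F, 0 < ε → ∃ N : ℕ, ∀ n, N ≤ n → ∀ x ∈ D, f x - g n x ∈ Set.Ioo (-ε) ε

/-- `A` is a cut of `F`. -/
def IsCut (A : Set F) : Prop :=
  A.Nonempty ∧ A ≠ Set.univ ∧ ∀ x ∈ A, ∀ y ∉ A, x < y

/-- `c` is a cut point of `A`. -/
def IsCutPoint (A : Set F) (c : F) : Prop :=
  ∀ x ∈ A, ∀ y ∉ A, x ≤ c ∧ c ≤ y

variable (F) in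
/-- The Cut Axiom: every cut of `F` has a cut point. -/
def CutAxiom : Prop := ∀ A : Set F, IsCut A → ∃ c : F, IsCutPoint A c

variable (F) in
/-- Lebesgue Integral Property. -/
def LIP : Prop :=
  ∀ a b : F, a ≤ b → ∀ f : F → F, LebMeasurable a b f → HasLebIntegral a b f

variable (F) in
/-- Lebesgue Measure Property. -/
def LMP : Prop :=
  ∀ a b : F, a ≤ b → ∀ E ⊆ Set.Icc a b, MeasSet a b E → HasLebMeasure a b E

variable (F) in
/-- Littlewood's First Principle. -/
def LP1 : Prop :=
  ∀ a b : F, a ≤ b → ∀ E ⊆ Set.Icc a b, MeasSet a b E → ∀ ε : F, 0 < ε →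
    ∃ (m : ℕ) (I : ℕ → Set F), (∀ i < m, IsInterval (I i) ∧ I i ⊆ Set.Icc a b) ∧
      ∃ J : F, HasLebIntegralNN a b
        (chi ((E \ ⋃ i < m, I i) ∪ ((⋃ i < m, I i) \ E))) J ∧ J < ε

variable (F) in
/-- Littlewood's Second Principle. -/
def LP2 : Prop :=
  ∀ a b : F, a ≤ b → ∀ f : F → F, LebMeasurable a b f → ∀ ε : F, 0 < ε →
    ∃ E ⊆ Set.Icc a b, MeasSet a b E ∧ ContOn (Set.Icc a b \ E) f ∧
      ∃ J : F, HasLebIntegralNN a b (chi E) J ∧ J < ε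

variable (F) in
/-- Littlewood's Third Principle. -/
def LP3 : Prop :=
  ∀ a b : F, a ≤ b → ∀ φ : ℕ → F → F, (∀ n, LebMeasurable a b (φ n)) →
    ∀ f : F → F, AEOn a b (fun x => SeqConv (fun n => φ n x) (f x)) →
    ∀ ε : F, 0 < ε →
      ∃ E ⊆ Set.Icc a b, MeasSet a b E ∧ UnifConvOn (Set.Icc a b \ E) φ f ∧
        ∃ J : F, HasLebIntegralNN a b (chi E) J ∧ J < ε


end Littlewood

namespace Littlewood

open Set
open scoped symmDiff

variable {F : Type*}

section Sequences

variable [Field F] [LinearOrder F] {s : ℕ → F} {L c : F}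

lemma seqConv_add_const_iff : SeqConv (fun n => s n + c) (L + c) ↔ SeqConv s L := by
  simp only [SeqConv, add_sub_add_right_eq_sub]

variable [IsStrictOrderedRing F]

lemma seqConv_iff_abs :
    SeqConv s L ↔ ∀ ε : F, 0 < ε → ∃ N : ℕ, ∀ n, N ≤ n → |s n - L| < ε := by
  simp only [SeqConv, mem_Ioo, abs_lt]

lemma seqConv_of_eventually_eq {N : ℕ} (h : ∀ n, N ≤ n → s n = L) : SeqConv s L :=
  fun ε hε => ⟨N, fun n hn => by simp [h n hn, hε]⟩

lemma SeqConv.const_sub (h : SeqConv s L) (c : F) : SeqConv (fun n => c - s n) (c - L) := by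
  rw [seqConv_iff_abs] at h ⊢
  simpa only [sub_sub_sub_cancel_left, abs_sub_comm] using h

lemma SeqConv.le_of_eventually_le (h : SeqConv s L) {N : ℕ} (hs : ∀ n, N ≤ n → s n ≤ c) :
    L ≤ c := by
  by_contra! hc
  obtain ⟨M, hM⟩ := h (L - c) (sub_pos.2 hc)
  have := (hM (max M N) (le_max_left M N)).1
  linarith [hs (max M N) (le_max_right M N)]

lemma SeqConv.ge_of_eventually_ge (h : SeqConv s L) {N : ℕ} (hs : ∀ n, N ≤ n → c ≤ s n) :
    c ≤ L := by
  by_contra! hc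
  obtain ⟨M, hM⟩ := h (c - L) (sub_pos.2 hc)
  have := (hM (max M N) (le_max_left M N)).2
  linarith [hs (max M N) (le_max_right M N)]

lemma SeqConv.le_of_antitone (h : SeqConv s L) (hs : Antitone s) (n : ℕ) : L ≤ s n :=
  h.le_of_eventually_le fun _ hm => hs hm

lemma SeqConv.le_of_monotone (h : SeqConv s L) (hs : Monotone s) (n : ℕ) : s n ≤ L :=
  h.ge_of_eventually_ge fun _ hm => hs hm

lemma eq_of_seqConv_const (h : SeqConv (fun _ => c) L) : c = L :=
  le_antisymm (h.ge_of_eventually_ge (N := 0) fun _ _ => le_rfl)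
    (h.le_of_eventually_le (N := 0) fun _ _ => le_rfl)

end Sequences

section NullSets

variable [Field F] [LinearOrder F] {a b : F}

lemma NullSet.mono {S S' : Set F} (h : NullSet a b S') (hS : S ⊆ S') : NullSet a b S :=
  fun ε hε =>
    let ⟨c, d, hcd, hcov, hsum⟩ := h ε hε
    ⟨c, d, hcd, hS.trans hcov, hsum⟩

lemma AEOn.exists_mem_Ioo {Q : F → Prop} {u v : F} (h : AEOn a b Q) (huv : Ioo u v ⊆ Icc a b)
    (hnull : ¬ NullSet a b (Ioo u v)) : ∃ x ∈ Ioo u v, Q x := by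
  by_contra! hQ
  exact hnull (NullSet.mono h fun x hx => ⟨huv hx, hQ x hx⟩)

variable [IsStrictOrderedRing F]

lemma nullSet_empty (a b : F) : NullSet a b ∅ := fun ε hε =>
  ⟨fun _ => a, fun _ => a, fun _ => ⟨le_rfl, by simp⟩, empty_subset _, 0, hε,
    seqConv_of_eventually_eq (N := 0) fun _ _ => by simp⟩

lemma AEOn.of_forall {Q : F → Prop} (h : ∀ x ∈ Icc a b, Q x) : AEOn a b Q :=
  (nullSet_empty a b).mono fun x hx => (hx.2 (h x hx.1)).elim

end NullSets

lemma chi_eq_chi_of_iff [Field F] {S S' : Set F} {x y : F} (h : x ∈ S ↔ y ∈ S') :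
    chi S x = chi S' y := by
  by_cases hx : x ∈ S
  · simp [chi, hx, h.1 hx]
  · simp [chi, hx, mt h.2 hx]

section StepFunctions

variable [Field F] [LinearOrder F] {a b c : F} {φ ψ : F → F} {I I₁ I₂ : F}

lemma HasStepIntegral.isStepOn (h : HasStepIntegral a b φ I) : IsStepOn a b φ :=
  let ⟨n, x, M, hx0, hxn, hlt, hM, _⟩ := h
  ⟨n, x, hx0, hxn, hlt, fun i hi => ⟨M i, hM i hi⟩⟩

lemma hasStepIntegral_const (hab : a ≤ b) (h : ∀ t ∈ Ioo a b, φ t = c) :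
    HasStepIntegral a b φ (c * (b - a)) := by
  rcases hab.eq_or_lt with rfl | hab
  · exact ⟨0, fun _ => a, fun _ => c, rfl, rfl, by simp, by simp, by simp⟩
  · refine ⟨1, fun i => if i = 0 then a else b, fun _ => c, rfl, rfl, ?_, ?_, by simp⟩
    · simpa using hab
    · simpa using h

lemma HasStepIntegral.congr (h : HasStepIntegral a b φ I) (he : ∀ t ∈ Ioo a b, φ t = ψ t) :
    HasStepIntegral a b ψ I := by
  obtain ⟨n, x, M, hx0, hxn, hlt, hM, rfl⟩ := h
  have hmono : MonotoneOn x (Iic n) :=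
    (strictMonoOn_Iic_of_lt_succ fun i hi => hlt i hi).monotoneOn
  refine ⟨n, x, M, hx0, hxn, hlt, fun i hi t ht => ?_, rfl⟩
  have hlo : a ≤ x i := hx0 ▸ hmono (mem_Iic.2 (Nat.zero_le n)) (mem_Iic.2 hi.le) (Nat.zero_le i)
  have hhi : x (i + 1) ≤ b := hxn ▸ hmono (mem_Iic.2 hi) (mem_Iic.2 le_rfl) hi
  rw [← he t ⟨hlo.trans_lt ht.1, ht.2.trans_le hhi⟩]
  exact hM i hi t ht

lemma HasStepIntegral.append (h₁ : HasStepIntegral a c φ I₁) (h₂ : HasStepIntegral c b φ I₂) :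
    HasStepIntegral a b φ (I₁ + I₂) := by
  obtain ⟨n, x, M, hx0, hxn, hlt, hM, rfl⟩ := h₁
  obtain ⟨n', x', M', hx0', hxn', hlt', hM', rfl⟩ := h₂
  set y : ℕ → F := fun i => if i ≤ n then x i else x' (i - n)
  set N : ℕ → F := fun i => if i < n then M i else M' (i - n)
  have hy : ∀ i ≤ n, y i = x i := fun i hi => if_pos hi
  have hy' : ∀ k, y (n + k) = x' k := by
    rintro (_ | k)
    · simp [y, hxn, hx0']
    · simp [y]
  have hN : ∀ i < n, N i = M i := fun i hi => if_pos hi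
  have hN' : ∀ k, N (n + k) = M' k := fun k => by simp [N]
  refine ⟨n + n', y, N, by rw [hy 0 (Nat.zero_le n), hx0], by rw [hy' n', hxn'], ?_, ?_, ?_⟩
  · intro i hi
    rcases lt_or_ge i n with hin | hin
    · rw [hy i hin.le, hy (i + 1) hin]
      exact hlt i hin
    · obtain ⟨k, rfl⟩ := Nat.exists_eq_add_of_le hin
      rw [hy' k, add_assoc, hy' (k + 1)]
      exact hlt' k (by omega)
  · intro i hi t ht
    rcases lt_or_ge i n with hin | hin
    · rw [hy i hin.le, hy (i + 1) hin] at ht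
      rw [hN i hin]
      exact hM i hin t ht
    · obtain ⟨k, rfl⟩ := Nat.exists_eq_add_of_le hin
      rw [hy' k, add_assoc, hy' (k + 1)] at ht
      rw [hN' k]
      exact hM' k (by omega) t ht
  · rw [Finset.sum_range_add]
    congr 1
    · refine Finset.sum_congr rfl fun i hi => ?_
      have hin := Finset.mem_range.1 hi
      rw [hN i hin, hy i hin.le, hy (i + 1) hin]
    · refine Finset.sum_congr rfl fun k _ => ?_
      rw [hN' k, hy' k, add_assoc, hy' (k + 1)]

lemma hasStepIntegral_ite_lt {p q w : F} (hpw : p ≤ w) (hwq : w ≤ q) :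
    HasStepIntegral p q (fun x => if w < x then (1 : F) else 0) (q - w) := by
  simpa using (hasStepIntegral_const hpw (c := 0) fun t ht => if_neg (not_lt.2 ht.2.le)).append
    (hasStepIntegral_const hwq (c := 1) fun t ht => if_pos ht.1)

lemma hasStepIntegral_ite_gt {p q r : F} (hpr : p ≤ r) (hrq : r ≤ q) :
    HasStepIntegral p q (fun x => if x < r then (1 : F) else 0) (r - p) := by
  simpa using (hasStepIntegral_const hpr (c := 1) fun t ht => if_pos ht.2).append
    (hasStepIntegral_const hrq (c := 0) fun t ht => if_neg (not_lt.2 ht.1.le))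

variable [IsStrictOrderedRing F]

lemma chi_nonneg (S : Set F) (x : F) : 0 ≤ chi S x := by
  by_cases hx : x ∈ S <;> simp [chi, hx]

lemma IsStepOn.lebMeasurableNN (h : IsStepOn a b φ) (hφ : ∀ x ∈ Icc a b, 0 ≤ φ x) :
    LebMeasurableNN a b φ :=
  ⟨fun _ => φ, fun _ => h, fun _ => hφ, fun _ _ _ => le_rfl,
    AEOn.of_forall fun _ _ => seqConv_of_eventually_eq (N := 0) fun _ _ => rfl⟩

end StepFunctions

section Breakpoints

variable [LinearOrder F]

def BreaksOn (S : Set F) (T : Finset F) (a b : F) : Prop :=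
  ∀ x y, a < x → x ≤ y → y < b → (∀ t ∈ T, t ∉ Icc x y) → (x ∈ S ↔ y ∈ S)

namespace BreaksOn

variable {S S' : Set F} {T T' : Finset F} {a b : F}

lemma restrict (h : BreaksOn S T a b) {a' b' : F} (ha : a ≤ a') (hb : b' ≤ b) :
    BreaksOn S T a' b' :=
  fun x y hx hxy hy hT => h x y (ha.trans_lt hx) hxy (hy.trans_le hb) hT

lemma union (h : BreaksOn S T a b) (h' : BreaksOn S' T' a b) :
    BreaksOn (S ∪ S') (T ∪ T') a b := by
  intro x y hx hxy hy hT
  rw [mem_union, mem_union, h x y hx hxy hy fun t ht => hT t (Finset.mem_union_left _ ht),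
    h' x y hx hxy hy fun t ht => hT t (Finset.mem_union_right _ ht)]

lemma symmDiff (h : BreaksOn S T a b) (h' : BreaksOn S' T' a b) :
    BreaksOn (S ∆ S') (T ∪ T') a b := by
  intro x y hx hxy hy hT
  rw [mem_symmDiff, mem_symmDiff, h x y hx hxy hy fun t ht => hT t (Finset.mem_union_left _ ht),
    h' x y hx hxy hy fun t ht => hT t (Finset.mem_union_right _ ht)]

lemma mem_iff (h : BreaksOn S T a b) (hT : ∀ t ∈ T, t ∉ Ioo a b) {x y : F} (hx : x ∈ Ioo a b)
    (hy : y ∈ Ioo a b) : x ∈ S ↔ y ∈ S := by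
  have key : ∀ x y, x ∈ Ioo a b → y ∈ Ioo a b → x ≤ y → (x ∈ S ↔ y ∈ S) :=
    fun x y hx hy hxy => h x y hx.1 hxy hy.2 fun t ht ht' =>
      hT t ht ⟨hx.1.trans_le ht'.1, ht'.2.trans_lt hy.2⟩
  rcases le_total x y with hxy | hyx
  · exact key x y hx hy hxy
  · exact (key y x hy hx hyx).symm

variable [Field F] [IsStrictOrderedRing F]

lemma exists_hasStepIntegral_chi_of_forall_notMem (h : BreaksOn S T a b)
    (hT : ∀ t ∈ T, t ∉ Ioo a b) (hab : a ≤ b) : ∃ I, HasStepIntegral a b (chi S) I :=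
  ⟨_, hasStepIntegral_const hab (c := chi S ((a + b) / 2)) fun t ht =>
    chi_eq_chi_of_iff (h.mem_iff hT ht ⟨by linarith [ht.1, ht.2], by linarith [ht.1, ht.2]⟩)⟩

lemma exists_hasStepIntegral_chi (h : BreaksOn S T a b) (hab : a ≤ b) :
    ∃ I, HasStepIntegral a b (chi S) I := by
  classical
  induction T using Finset.induction_on_max generalizing b with
  | empty => exact h.exists_hasStepIntegral_chi_of_forall_notMem (by simp) hab
  | insert c T hlt ih =>
    by_cases hc : c ∈ Ioo a b
    · have hleft : BreaksOn S T a c := by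
        refine fun x y hx hxy hy hT => h x y hx hxy (hy.trans hc.2) fun t ht hmem => ?_
        rcases Finset.mem_insert.1 ht with rfl | htT
        · exact (hmem.2.trans_lt hy).false
        · exact hT t htT hmem
      have hright : ∀ t ∈ insert c T, t ∉ Ioo c b := by
        intro t ht hmem
        rcases Finset.mem_insert.1 ht with rfl | htT
        · exact hmem.1.false
        · exact (hmem.1.trans (hlt t htT)).false
      obtain ⟨I₁, h₁⟩ := ih hleft hc.1.le
      obtain ⟨I₂, h₂⟩ := (h.restrict hc.1.le le_rfl).exists_hasStepIntegral_chi_of_forall_notMem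
        hright hc.2.le
      exact ⟨_, h₁.append h₂⟩
    · refine ih (fun x y hx hxy hy hT => h x y hx hxy hy fun t ht hmem => ?_) hab
      rcases Finset.mem_insert.1 ht with rfl | htT
      · exact hc ⟨hx.trans_le hmem.1, hmem.2.trans_lt hy⟩
      · exact hT t htT hmem

end BreaksOn

end Breakpoints

section Intervals

variable [Field F] [LinearOrder F] [IsStrictOrderedRing F]

lemma IsIntervalWith.breaksOn {S : Set F} {c d : F} (hS : IsIntervalWith S c d) (a b : F) :
    BreaksOn S {c, d} a b := by
  intro x y _ hxy _ hT
  have hc : c < x ∨ y < c := by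
    by_contra! h'
    exact hT c (by simp) h'
  have hd : d < x ∨ y < d := by
    by_contra! h'
    exact hT d (by simp) h'
  rcases hS with rfl | rfl | rfl | rfl <;>
    simp only [mem_Icc, mem_Ico, mem_Ioc, mem_Ioo] <;>
    rcases hc with hc | hc <;> rcases hd with hd | hd <;>
    constructor <;> intro h <;> constructor <;> linarith [h.1, h.2]

lemma exists_breaksOn_biUnion {I : ℕ → Set F} {m : ℕ} (hI : ∀ i < m, IsInterval (I i))
    (a b : F) : ∃ T, BreaksOn (⋃ i < m, I i) T a b := by
  induction m with
  | zero => exact ⟨∅, fun x y _ _ _ _ => by simp⟩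
  | succ m ih =>
    obtain ⟨T, hT⟩ := ih fun i hi => hI i (hi.trans m.lt_succ_self)
    obtain ⟨c, d, hcd⟩ := hI m m.lt_succ_self
    rw [biUnion_lt_succ]
    exact ⟨T ∪ {c, d}, hT.union (hcd.breaksOn a b)⟩

lemma measSet_of_breaksOn {E : Set F} {T : Finset F} {a b : F} (h : BreaksOn E T a b)
    (hab : a ≤ b) : MeasSet a b E :=
  (h.exists_hasStepIntegral_chi hab).choose_spec.isStepOn.lebMeasurableNN
    fun x _ => chi_nonneg E x

/-- Splicing `h n` into `f` on `(p, q)` gives step functions decreasing to `f` almost everywhere,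
so their integrals `I₁ + K n + I₃` tend to `J`. -/
theorem HasLebIntegralNN.seqConv_window {a b p q I₁ I₃ J : F} {f : F → F} {h : ℕ → F → F}
    {K : ℕ → F} (hf : HasLebIntegralNN a b f J) (hf0 : ∀ x ∈ Icc a b, 0 ≤ f x)
    (h₁ : HasStepIntegral a p f I₁) (h₃ : HasStepIntegral q b f I₃)
    (hK : ∀ n, HasStepIntegral p q (h n) (K n)) (hh0 : ∀ n, ∀ x ∈ Ioo p q, 0 ≤ h n x)
    (hanti : ∀ x ∈ Ioo p q, Antitone fun n => h n x)
    (hconv : NullSet a b {x ∈ Ioo p q | ¬ SeqConv (fun n => h n x) (f x)}) :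
    SeqConv K (J - I₁ - I₃) := by
  classical
  set φ : ℕ → F → F := fun n x => if x ∈ Ioo p q then h n x else f x
  have hφx : ∀ n x, φ n x = if x ∈ Ioo p q then h n x else f x := fun _ _ => rfl
  have hφ : ∀ n, HasStepIntegral a b (φ n) (I₁ + K n + I₃) := fun n =>
    ((h₁.congr fun x hx => (if_neg fun hx' : x ∈ Ioo p q => (hx'.1.trans hx.2).false).symm).append
      ((hK n).congr fun x hx => (if_pos hx).symm)).append
      (h₃.congr fun x hx => (if_neg fun hx' : x ∈ Ioo p q => (hx.1.trans hx'.2).false).symm)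
  have happrox : ApproxSeq a b φ f := by
    refine ⟨fun n => (hφ n).isStepOn, fun n x hx => ?_, fun n x hx => ?_, ?_⟩
    · by_cases hx' : x ∈ Ioo p q
      · rw [hφx, if_pos hx']
        exact hh0 n x hx'
      · rw [hφx, if_neg hx']
        exact hf0 x hx
    · by_cases hx' : x ∈ Ioo p q
      · rw [hφx, hφx, if_pos hx', if_pos hx']
        exact hanti x hx' n.le_succ
      · rw [hφx, hφx, if_neg hx', if_neg hx']
    · refine hconv.mono fun x ⟨_, hnc⟩ => ?_
      by_cases hx' : x ∈ Ioo p q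
      · simp only [hφx, if_pos hx'] at hnc
        exact ⟨hx', hnc⟩
      · simp only [hφx, if_neg hx'] at hnc
        exact (hnc (seqConv_of_eventually_eq (N := 0) fun _ _ => rfl)).elim
  have hsum := hf.2 φ happrox _ hφ
  refine seqConv_add_const_iff (c := I₁ + I₃) |>.1 ?_
  convert hsum using 1
  · ext n
    ring
  · ring

theorem not_hasLebIntegralNN_chi_symmDiff_of_nullSet {a b u v J : F} {U : Set F} {T : Finset F}
    (hau : a < u) (huv : u < v) (hvb : v < b) (hN : NullSet a b (Ioo u v))
    (hU : BreaksOn U T a b) : ¬ HasLebIntegralNN a b (chi (Ioo u v ∆ U)) J := by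
  intro hJ
  have hS := (IsIntervalWith.breaksOn (S := Ioo u v) (Or.inr (Or.inr (Or.inr rfl))) a b).symmDiff hU
  obtain ⟨I₁, h₁⟩ := (hS.restrict le_rfl (huv.trans hvb).le).exists_hasStepIntegral_chi hau.le
  obtain ⟨I₃, h₃⟩ := (hS.restrict (hau.trans huv).le le_rfl).exists_hasStepIntegral_chi hvb.le
  have key : ∀ c : F, 0 ≤ c → c * (v - u) = J - I₁ - I₃ := fun c hc =>
    eq_of_seqConv_const <| hJ.seqConv_window (h := fun _ _ => c) (fun x _ => chi_nonneg _ x) h₁ h₃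
      (fun _ => hasStepIntegral_const huv.le fun _ _ => rfl) (fun _ _ _ => hc)
      (fun _ _ => antitone_const) (hN.mono fun x hx => hx.1)
  linarith [key 0 le_rfl, key 1 zero_le_one]

end Intervals

section Ladders

variable {α : Type*}

def CofinalSeq [Preorder α] (A : Set α) (w : ℕ → α) : Prop :=
  Monotone w ∧ (∀ n, w n ∈ A) ∧ ∀ x ∈ A, ∃ n, x ≤ w n

def CoinitialSeq [Preorder α] (B : Set α) (r : ℕ → α) : Prop :=
  Antitone r ∧ (∀ n, r n ∈ B) ∧ ∀ y ∈ B, ∃ n, r n ≤ y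

lemma exists_cofinalSeq [LinearOrder α] {A : Set α} {t : ℕ → α} (ht : ∀ n, t n ∈ A)
    (hcof : ∀ x ∈ A, ∃ n, x ≤ t n) : ∃ w, CofinalSeq A w := by
  refine ⟨partialSups t, (partialSups t).monotone, fun n => ?_, fun x hx => ?_⟩
  · obtain ⟨i, -, hi⟩ := Finset.exists_mem_eq_sup' Finset.nonempty_Iic t (s := Finset.Iic n)
    rw [partialSups_apply, hi]
    exact ht i
  · obtain ⟨n, hn⟩ := hcof x hx
    exact ⟨n, hn.trans (le_partialSups t n)⟩

lemma exists_coinitialSeq [LinearOrder α] {B : Set α} {t : ℕ → α} (ht : ∀ n, t n ∈ B)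
    (hcoi : ∀ y ∈ B, ∃ n, t n ≤ y) : ∃ r, CoinitialSeq B r :=
  exists_cofinalSeq (α := αᵒᵈ) ht hcoi

lemma CofinalSeq.max_const [LinearOrder α] {A : Set α} {w : ℕ → α} (hw : CofinalSeq A w)
    {p : α} (hp : p ∈ A) : CofinalSeq A fun n => max (w n) p :=
  ⟨fun _ _ hmn => max_le_max (hw.1 hmn) le_rfl, fun n => max_rec' (· ∈ A) (hw.2.1 n) hp,
    fun x hx => (hw.2.2 x hx).imp fun _ hn => hn.trans (le_max_left _ _)⟩

lemma CoinitialSeq.min_const [LinearOrder α] {B : Set α} {r : ℕ → α} (hr : CoinitialSeq B r)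
    {q : α} (hq : q ∈ B) : CoinitialSeq B fun n => min (r n) q :=
  CofinalSeq.max_const (α := αᵒᵈ) hr hq

end Ladders

section Gaps

variable [LinearOrder F]

def IsGap (A : Set F) : Prop := IsCut A ∧ ∀ c, ¬ IsCutPoint A c

namespace IsGap

variable {A : Set F} {a b x y : F}

lemma lt (hA : IsGap A) (hx : x ∈ A) (hy : y ∉ A) : x < y := hA.1.2.2 x hx y hy

lemma mem_of_le (hA : IsGap A) (hx : x ∈ A) (hyx : y ≤ x) : y ∈ A := by
  by_contra hy
  exact (hA.lt hx hy).not_ge hyx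

lemma exists_gt (hA : IsGap A) (hx : x ∈ A) : ∃ x' ∈ A, x < x' := by
  by_contra! h
  exact hA.2 x fun z hz _ hy => ⟨h z hz, (hA.lt hx hy).le⟩

lemma exists_lt (hA : IsGap A) (hy : y ∉ A) : ∃ y' ∉ A, y' < y := by
  by_contra! h
  exact hA.2 y fun _ hx z hz => ⟨(hA.lt hx hy).le, h z hz⟩

lemma exists_window (hA : IsGap A) (ha : a ∈ A) (hb : b ∉ A) (T : Finset F) :
    ∃ p ∈ A, ∃ q ∉ A, a < p ∧ q < b ∧ ∀ t ∈ T, t ∉ Icc p q := by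
  classical
  induction T using Finset.induction_on with
  | empty =>
    obtain ⟨p, hp, hap⟩ := hA.exists_gt ha
    obtain ⟨q, hq, hqb⟩ := hA.exists_lt hb
    exact ⟨p, hp, q, hq, hap, hqb, by simp⟩
  | insert t T _ ih =>
    obtain ⟨p, hp, q, hq, hap, hqb, hT⟩ := ih
    by_cases ht : t ∈ A
    · obtain ⟨p', hp', hpp'⟩ := hA.exists_gt (max_rec' (· ∈ A) hp ht)
      refine ⟨p', hp', q, hq, hap.trans ((le_max_left p t).trans_lt hpp'), hqb, fun s hs hmem => ?_⟩
      rcases Finset.mem_insert.1 hs with rfl | hsT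
      · exact (((le_max_right p s).trans_lt hpp').trans_le hmem.1).false
      · exact hT s hsT ⟨(le_max_left p t).trans (hpp'.le.trans hmem.1), hmem.2⟩
    · obtain ⟨q', hq', hq'q⟩ := hA.exists_lt (min_rec' (· ∉ A) hq ht)
      refine ⟨p, hp, q', hq', hap, (hq'q.trans_le (min_le_left q t)).trans hqb, fun s hs hmem => ?_⟩
      rcases Finset.mem_insert.1 hs with rfl | hsT
      · exact ((hmem.2.trans_lt hq'q).trans_le (min_le_right q s)).false
      · exact hT s hsT ⟨hmem.1, hmem.2.trans ((hq'q.trans_le (min_le_left q t)).le)⟩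

end IsGap

end Gaps

section GapLadders

variable [Field F] [LinearOrder F] [IsStrictOrderedRing F] {A : Set F} {w r : ℕ → F}

lemma CofinalSeq.not_seqConv (hw : CofinalSeq A w) (hA : IsGap A) (L : F) : ¬ SeqConv w L :=
  fun h => hA.2 L fun x hx _ hy =>
    ⟨let ⟨n, hn⟩ := hw.2.2 x hx; hn.trans (h.le_of_monotone hw.1 n),
      h.le_of_eventually_le (N := 0) fun n _ => (hA.lt (hw.2.1 n) hy).le⟩

lemma CoinitialSeq.not_seqConv (hr : CoinitialSeq Aᶜ r) (hA : IsGap A) (L : F) :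
    ¬ SeqConv r L :=
  fun h => hA.2 L fun _ hx y hy =>
    ⟨h.ge_of_eventually_ge (N := 0) fun n _ => (hA.lt hx (hr.2.1 n)).le,
      let ⟨n, hn⟩ := hr.2.2 y hy; (h.le_of_antitone hr.1 n).trans hn⟩

lemma antitone_ite_lt (hw : Monotone w) (x : F) :
    Antitone fun n => if w n < x then (1 : F) else 0 := by
  intro m n hmn
  dsimp only
  split_ifs with h₁ h₂ <;> first | exact absurd ((hw hmn).trans_lt h₁) h₂ | norm_num

lemma antitone_ite_gt (hr : Antitone r) (x : F) :
    Antitone fun n => if x < r n then (1 : F) else 0 := by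
  intro m n hmn
  dsimp only
  split_ifs with h₁ h₂ <;> first | exact absurd (h₁.trans_le (hr hmn)) h₂ | norm_num

lemma CofinalSeq.seqConv_ite_lt (hw : CofinalSeq A w) (hA : IsGap A) (x : F) :
    SeqConv (fun n => if w n < x then (1 : F) else 0) (chi Aᶜ x) := by
  by_cases hx : x ∈ A
  · obtain ⟨N, hN⟩ := hw.2.2 x hx
    exact seqConv_of_eventually_eq (N := N) fun n hn => by
      simp [chi, hx, not_lt.2 (hN.trans (hw.1 hn))]
  · exact seqConv_of_eventually_eq (N := 0) fun n _ => by simp [chi, hx, hA.lt (hw.2.1 n) hx]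

lemma CoinitialSeq.seqConv_ite_gt (hr : CoinitialSeq Aᶜ r) (hA : IsGap A) (x : F) :
    SeqConv (fun n => if x < r n then (1 : F) else 0) (chi A x) := by
  by_cases hx : x ∈ A
  · exact seqConv_of_eventually_eq (N := 0) fun n _ => by simp [chi, hx, hA.lt hx (hr.2.1 n)]
  · obtain ⟨N, hN⟩ := hr.2.2 x hx
    exact seqConv_of_eventually_eq (N := N) fun n hn => by
      simp [chi, hx, not_lt.2 ((hr.1 hn).trans hN)]

lemma IsGap.exists_cofinalSeq_of_archimedean [Archimedean F] (hA : IsGap A) :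
    ∃ w, CofinalSeq A w := by
  classical
  obtain ⟨a, ha⟩ := hA.1.1
  obtain ⟨g, hg⟩ := exists_surjective_nat ℚ
  refine exists_cofinalSeq (t := fun n => if (g n : F) ∈ A then (g n : F) else a)
    (fun n => by split_ifs with h; exacts [h, ha]) fun x hx => ?_
  obtain ⟨x', hx'A, hxx'⟩ := hA.exists_gt hx
  obtain ⟨q, hxq, hqx'⟩ := exists_rat_btwn hxx'
  obtain ⟨n, rfl⟩ := hg q
  exact ⟨n, by rw [if_pos (hA.mem_of_le hx'A hqx'.le)]; exact hxq.le⟩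

lemma isGap_natBounded (hF : ¬ Archimedean F) : IsGap {x : F | ∃ n : ℕ, x < n} := by
  obtain ⟨b, hb⟩ : ∃ b : F, ∀ n : ℕ, (n : F) ≤ b := by simpa [archimedean_iff_nat_lt] using hF
  have hbA : b ∉ {x : F | ∃ n : ℕ, x < n} := fun ⟨n, hn⟩ => (hb n).not_gt hn
  refine ⟨⟨⟨0, 1, by norm_num⟩, fun h => hbA (by rw [h]; exact mem_univ b), ?_⟩, fun c hc => ?_⟩
  · rintro x ⟨n, hn⟩ y hy
    by_contra! hxy
    exact hy ⟨n, hxy.trans_lt hn⟩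
  · by_cases hcA : ∃ n : ℕ, c < n
    · obtain ⟨n, hn⟩ := hcA
      have := (hc (c + 1) ⟨n + 1, by push_cast; linarith⟩ b hbA).1
      linarith
    · have hc1 : c - 1 ∈ {x : F | ∃ n : ℕ, x < n} := by
        by_contra h
        linarith [(hc 0 ⟨1, by norm_num⟩ (c - 1) h).2]
      obtain ⟨n, hn⟩ := hc1
      exact hcA ⟨n + 1, by push_cast; linarith⟩

lemma cofinalSeq_natCast : CofinalSeq {x : F | ∃ n : ℕ, x < n} fun n => (n : F) :=
  ⟨Nat.mono_cast, fun n => ⟨n + 1, by push_cast; linarith⟩, fun _ ⟨n, hn⟩ => ⟨n, hn.le⟩⟩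

lemma exists_isGap_cofinalSeq (hCA : ¬ CutAxiom F) :
    ∃ A : Set F, IsGap A ∧ ∃ w, CofinalSeq A w := by
  by_cases hF : Archimedean F
  · simp only [CutAxiom, not_forall, not_exists] at hCA
    obtain ⟨A, hcut, hno⟩ := hCA
    exact ⟨A, ⟨hcut, hno⟩, IsGap.exists_cofinalSeq_of_archimedean ⟨hcut, hno⟩⟩
  · exact ⟨_, isGap_natBounded hF, _, cofinalSeq_natCast⟩

end GapLadders

lemma exists_lt_and_not_succ {P : ℕ → Prop} (h0 : P 0) {n : ℕ} (hn : ¬ P n) :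
    ∃ i < n, P i ∧ ¬ P (i + 1) := by
  induction n with
  | zero => exact absurd h0 hn
  | succ n ih =>
    by_cases h : P n
    · exact ⟨n, n.lt_succ_self, h, hn⟩
    · obtain ⟨i, hi, h'⟩ := ih h
      exact ⟨i, hi.trans n.lt_succ_self, h'⟩

lemma IsStepOn.exists_const_straddle [LinearOrder F] {a b : F} {φ : F → F} {A : Set F}
    (hφ : IsStepOn a b φ) (ha : a ∈ A) (hb : b ∉ A) : ∃ α ∈ A, ∃ β ∉ A, ∃ v, ∀ s ∈ Ioo α β, φ s = v := by
  obtain ⟨n, x, hx0, hxn, -, hconst⟩ := hφ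
  obtain ⟨i, hin, hiA, hiA'⟩ :=
    exists_lt_and_not_succ (P := fun i => x i ∈ A) (hx0 ▸ ha) (hxn ▸ hb)
  obtain ⟨v, hv⟩ := hconst i hin
  exact ⟨x i, hiA, x (i + 1), hiA', v, hv⟩

section GapCase

variable [Field F] [LinearOrder F] [IsStrictOrderedRing F] {A : Set F} {a b : F}

lemma measSet_Icc_diff {w : ℕ → F} (hA : IsGap A) (hw : CofinalSeq A w) (ha : a ∈ A)
    (hb : b ∉ A) : MeasSet a b (Icc a b \ A) := by
  have hw' := hw.max_const ha
  refine ⟨fun n x => if max (w n) a < x then 1 else 0, fun n => ?_, fun n x _ => by positivity,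
    fun n x _ => antitone_ite_lt hw'.1 x n.le_succ, AEOn.of_forall fun x hx => ?_⟩
  · exact (hasStepIntegral_ite_lt (le_max_right _ _) (hA.lt (hw'.2.1 n) hb).le).isStepOn
  · convert hw'.seqConv_ite_lt hA x using 1
    exact chi_eq_chi_of_iff (by simp [hx])

theorem not_lebMeasurableNN_of_not_coinitialSeq {p q : F} {f : F → F} (hA : IsGap A)
    (ha : a ∈ A) (hb : b ∉ A) (hnull : ∀ u v, a < u → u < v → v < b → ¬ NullSet a b (Ioo u v))
    (hpA : p ∈ A) (hqA : q ∉ A) (hap : a < p) (hqb : q < b)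
    (hf : ∀ x ∈ Ioo p q, f x = chi A x) (hcoi : ¬ ∃ r, CoinitialSeq Aᶜ r) :
    ¬ LebMeasurableNN a b f := by
  rintro ⟨ψ, hstep, -, hanti, hae⟩
  have hdense : ∀ u v, p ≤ u → u < v → v ≤ q →
      ∃ x ∈ Ioo u v, SeqConv (fun n => ψ n x) (f x) := fun u v hpu huv hvq =>
    hae.exists_mem_Ioo
      (fun x hx => ⟨(hap.le.trans hpu).trans hx.1.le, hx.2.le.trans (hvq.trans hqb.le)⟩)
      (hnull u v (hap.trans_le hpu) huv (hvq.trans_lt hqb))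
  choose α hαA β hβA v hv using fun n => (hstep n).exists_const_straddle ha hb
  -- seen from points of `A` just below the gap, the values `v n` are at least `1`
  have hv1 : ∀ n, 1 ≤ v n := by
    intro n
    obtain ⟨δ, hδA, hδ⟩ := hA.exists_gt (max_rec' (· ∈ A) (hαA n) hpA)
    obtain ⟨x, hx, hconv⟩ := hdense _ δ (le_max_right _ _) hδ (hA.lt hδA hqA).le
    have hxA : x ∈ A := hA.mem_of_le hδA hx.2.le
    have hxpq : x ∈ Ioo p q := ⟨(le_max_right _ _).trans_lt hx.1, hA.lt hxA hqA⟩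
    rw [hf x hxpq, chi, indicator_of_mem hxA] at hconv
    have hxab : x ∈ Icc a b := ⟨(hap.trans hxpq.1).le, (hxpq.2.trans hqb).le⟩
    calc 1 ≤ ψ n x := hconv.le_of_antitone (antitone_nat_of_succ_le fun m => hanti m x hxab) n
      _ = v n := hv n x ⟨(le_max_left _ _).trans_lt hx.1, hA.lt hxA (hβA n)⟩
  -- without a coinitial sequence in `Aᶜ`, all straddling intervals contain a common `(y', y)`
  obtain ⟨y, hyA, hy⟩ : ∃ y ∉ A, ∀ n, y < min (β n) q := by
    by_contra! h
    exact hcoi (exists_coinitialSeq (fun n => min_rec' (· ∉ A) (hβA n) hqA) h)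
  obtain ⟨y', hy'A, hy'y⟩ := hA.exists_lt hyA
  have hyq : y < q := (hy 0).trans_le (min_le_right _ _)
  obtain ⟨x, hx, hconv⟩ := hdense y' y (hA.lt hpA hy'A).le hy'y hyq.le
  have hxA : x ∉ A := fun hxA => hy'A (hA.mem_of_le hxA hx.1.le)
  have hxpq : x ∈ Ioo p q := ⟨hA.lt hpA hxA, hx.2.trans hyq⟩
  rw [hf x hxpq, chi, indicator_of_notMem hxA] at hconv
  have hv0 : SeqConv v 0 := by
    convert hconv using 2 with n
    exact (hv n x ⟨hA.lt (hαA n) hxA, hx.2.trans ((hy n).trans_le (min_le_left _ _))⟩).symm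
  exact absurd (hv0.ge_of_eventually_ge (N := 0) fun n _ => hv1 n) (by norm_num)

theorem not_hasLebIntegralNN_chi_symmDiff_of_isGap {w : ℕ → F} {U : Set F} {T : Finset F} {J : F}
    (hA : IsGap A) (hw : CofinalSeq A w) (ha : a ∈ A) (hb : b ∉ A)
    (hnull : ∀ u v, a < u → u < v → v < b → ¬ NullSet a b (Ioo u v)) (hU : BreaksOn U T a b) :
    ¬ HasLebIntegralNN a b (chi ((Icc a b \ A) ∆ U)) J := by
  intro hJ
  obtain ⟨p, hpA, q, hqA, hap, hqb, hT⟩ := hA.exists_window ha hb T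
  have hpq : p < q := hA.lt hpA hqA
  have hUpq : ∀ x ∈ Ioo p q, x ∈ U ↔ p ∈ U := fun x hx => (hU p x hap hx.1.le (hx.2.trans hqb)
    fun t ht hmem => hT t ht ⟨hmem.1, hmem.2.trans hx.2.le⟩).symm
  have hleft : BreaksOn (Icc a b \ A) ∅ a p := fun x y hx _ hy _ =>
    iff_of_false (fun hxE => hxE.2 (hA.mem_of_le hpA (by linarith)))
      fun hyE => hyE.2 (hA.mem_of_le hpA hy.le)
  have hright : BreaksOn (Icc a b \ A) ∅ q b := fun x y hx hxy hy _ =>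
    iff_of_true ⟨⟨by linarith, by linarith⟩, fun hxA => hqA (hA.mem_of_le hxA hx.le)⟩
      ⟨⟨by linarith, hy.le⟩, fun hyA => hqA (hA.mem_of_le hyA (hx.le.trans hxy))⟩
  obtain ⟨I₁, h₁⟩ := BreaksOn.exists_hasStepIntegral_chi
    (hleft.symmDiff (hU.restrict le_rfl (hpq.trans hqb).le)) hap.le
  obtain ⟨I₃, h₃⟩ := BreaksOn.exists_hasStepIntegral_chi
    (hright.symmDiff (hU.restrict (hap.trans hpq).le le_rfl)) hqb.le
  have hf0 : ∀ x ∈ Icc a b, 0 ≤ chi ((Icc a b \ A) ∆ U) x := fun x _ => chi_nonneg _ x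
  have hIcc : ∀ x ∈ Ioo p q, x ∈ Icc a b := fun x hx => ⟨(hap.trans hx.1).le, (hx.2.trans hqb).le⟩
  by_cases hpU : p ∈ U
  · have hS : ∀ x ∈ Ioo p q, chi ((Icc a b \ A) ∆ U) x = chi A x := fun x hx =>
      chi_eq_chi_of_iff (by simp [mem_symmDiff, (hUpq x hx).2 hpU, hIcc x hx])
    by_cases hcoi : ∃ r, CoinitialSeq Aᶜ r
    · obtain ⟨r, hr⟩ := hcoi
      have hr' := hr.min_const hqA
      have hK := hJ.seqConv_window hf0 h₁ h₃
        (fun n => hasStepIntegral_ite_gt (hA.lt hpA (hr'.2.1 n)).le (min_le_right _ _))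
        (fun n x _ => by positivity) (fun x _ => antitone_ite_gt hr'.1 x)
        ((nullSet_empty a b).mono fun x ⟨hx, hnc⟩ => hnc (hS x hx ▸ hr'.seqConv_ite_gt hA x))
      exact hr'.not_seqConv hA _ (by simpa using (seqConv_add_const_iff (c := p)).2 hK)
    · exact not_lebMeasurableNN_of_not_coinitialSeq hA ha hb hnull hpA hqA hap hqb hS hcoi hJ.1
  · have hS : ∀ x ∈ Ioo p q, chi ((Icc a b \ A) ∆ U) x = chi Aᶜ x := fun x hx =>
      chi_eq_chi_of_iff (by simp [mem_symmDiff, mt (hUpq x hx).1 hpU, hIcc x hx])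
    have hw' := hw.max_const hpA
    have hK := hJ.seqConv_window hf0 h₁ h₃
      (fun n => hasStepIntegral_ite_lt (le_max_right _ _) (hA.lt (hw'.2.1 n) hqA).le)
      (fun n x _ => by positivity) (fun x _ => antitone_ite_lt hw'.1 x)
      ((nullSet_empty a b).mono fun x ⟨hx, hnc⟩ => hnc (hS x hx ▸ hw'.seqConv_ite_lt hA x))
    exact hw'.not_seqConv hA _ (by simpa using hK.const_sub q)

end GapCase

theorem not_cutAxiom_implies_not_littlewoodFirst (F : Type*) [Field F] [LinearOrder F] [IsStrictOrderedRing F]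
    (hCA : ¬ CutAxiom F) :
    ∃ a b : F, a ≤ b ∧ ∃ E ⊆ Set.Icc a b, MeasSet a b E ∧ ∃ ε : F, 0 < ε ∧
      ∀ (m : ℕ) (I : ℕ → Set F), (∀ i < m, IsInterval (I i) ∧ I i ⊆ Set.Icc a b) →
        ¬ ∃ J : F, HasLebIntegralNN a b
            (chi ((E \ ⋃ i < m, I i) ∪ ((⋃ i < m, I i) \ E))) J ∧ J < ε := by
  by_cases hnull : ∃ a u v b : F, a < u ∧ u < v ∧ v < b ∧ NullSet a b (Ioo u v)
  · obtain ⟨a, u, v, b, hau, huv, hvb, hN⟩ := hnull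
    have hab : a ≤ b := (hau.trans (huv.trans hvb)).le
    have hE : IsIntervalWith (Ioo u v) u v := Or.inr (Or.inr (Or.inr rfl))
    refine ⟨a, b, hab, Ioo u v, fun x hx => ⟨(hau.trans hx.1).le, (hx.2.trans hvb).le⟩,
      measSet_of_breaksOn (hE.breaksOn a b) hab, 1, one_pos, fun m I hI => ?_⟩
    obtain ⟨T, hT⟩ := exists_breaksOn_biUnion (fun i hi => (hI i hi).1) a b
    exact fun ⟨J, hJ, _⟩ => not_hasLebIntegralNN_chi_symmDiff_of_nullSet hau huv hvb hN hT hJ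
  · obtain ⟨A, hA, w, hw⟩ := exists_isGap_cofinalSeq hCA
    obtain ⟨⟨a, ha⟩, hAuniv, -⟩ := hA.1
    obtain ⟨b, hb⟩ := (ne_univ_iff_exists_notMem A).1 hAuniv
    refine ⟨a, b, (hA.lt ha hb).le, Icc a b \ A, sdiff_subset, measSet_Icc_diff hA hw ha hb,
      1, one_pos, fun m I hI => ?_⟩
    obtain ⟨T, hT⟩ := exists_breaksOn_biUnion (fun i hi => (hI i hi).1) a b
    exact fun ⟨J, hJ, _⟩ => not_hasLebIntegralNN_chi_symmDiff_of_isGap hA hw ha hb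
      (fun u v hau huv hvb hN => hnull ⟨a, u, v, b, hau, huv, hvb, hN⟩) hT hJ

end Littlewood
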